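/- arXiv:1910.05487 — 3 statements merged into one kernel-verified Lean document; each statement's English description precedes it below -/
import Mathlib

section
/- Let R be a commutative ring and I an ideal contained in the Jacobson radical of R. If M and N are projective R-modules and there exists an R/I-module isomorphism φ : M/IM → N/IN, then there exists an R-module isomorphism ψ : M → N lifting φ (i.e., ψ reduces to φ modulo I). -/
/-!
Lift `φ` and `φ⁻¹` to maps `f : M → N` and `g : N → M` using projectivity. By Nakayama's lemma
`f` is surjective, since it is surjective modulo `I`; likewise `g ∘ f`, which is the identity
modulo `I`, is a surjective endomorphism of a finite module, hence injective (Vasconcelos), so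
`f` is injective as well.
-/

section

variable {R M N : Type*} [CommRing R] [AddCommGroup M] [Module R M] [AddCommGroup N] [Module R N]
  {I : Ideal R}

theorem LinearMap.surjective_of_mkQ_comp_eq [Module.Finite R N]
    (hI : I ≤ (⊥ : Ideal R).jacobson) {f : M →ₗ[R] N}
    {φ : M ⧸ I • (⊤ : Submodule R M) →ₗ[R] N ⧸ I • (⊤ : Submodule R N)}
    (hφ : Function.Surjective φ)
    (hf : (I • ⊤ : Submodule R N).mkQ ∘ₗ f = φ ∘ₗ (I • (⊤ : Submodule R M)).mkQ) :
    Function.Surjective f :=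
  f.surjective_of_surjective_comp_mkQ I hI <| by
    rw [hf, LinearMap.coe_comp]
    exact hφ.comp (Submodule.mkQ_surjective _)

theorem LinearMap.bijective_of_mkQ_comp_eq_mkQ [Module.Finite R M]
    (hI : I ≤ (⊥ : Ideal R).jacobson) {g : M →ₗ[R] M}
    (hg : (I • ⊤ : Submodule R M).mkQ ∘ₗ g = (I • (⊤ : Submodule R M)).mkQ) :
    Function.Bijective g :=
  OrzechProperty.bijective_of_surjective_endomorphism g <|
    g.surjective_of_mkQ_comp_eq hI Function.surjective_id <| by rw [hg, LinearMap.id_comp]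

end

/-- Let `R` be a commutative ring and `I` an ideal contained in the Jacobson radical of `R`.
If `M` and `N` are (finitely generated) projective `R`-modules and
`φ : M/IM ≃ N/IN` is an isomorphism of the reductions, then `φ` lifts to an isomorphism
`ψ : M ≃ N`, i.e. `ψ` reduces to `φ` modulo `I`. -/
theorem exists_linearEquiv_lift_of_le_jacobson
    {R : Type*} [CommRing R] (I : Ideal R)
    (hI : I ≤ Ideal.jacobson (⊥ : Ideal R))
    (M N : Type*) [AddCommGroup M] [Module R M] [AddCommGroup N] [Module R N]
    [Module.Finite R M] [Module.Projective R M]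
    [Module.Finite R N] [Module.Projective R N]
    (φ : (M ⧸ (I • (⊤ : Submodule R M))) ≃ₗ[R] (N ⧸ (I • (⊤ : Submodule R N)))) :
    ∃ ψ : M ≃ₗ[R] N, ∀ m : M,
      Submodule.Quotient.mk (p := I • (⊤ : Submodule R N)) (ψ m)
        = φ (Submodule.Quotient.mk (p := I • (⊤ : Submodule R M)) m) := by
  obtain ⟨f, hf⟩ := Module.projective_lifting_property (I • ⊤ : Submodule R N).mkQ
    (φ.toLinearMap ∘ₗ (I • ⊤ : Submodule R M).mkQ) (Submodule.mkQ_surjective _)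
  obtain ⟨g, hg⟩ := Module.projective_lifting_property (I • ⊤ : Submodule R M).mkQ
    (φ.symm.toLinearMap ∘ₗ (I • ⊤ : Submodule R N).mkQ) (Submodule.mkQ_surjective _)
  have hgf : (I • ⊤ : Submodule R M).mkQ ∘ₗ (g ∘ₗ f) = (I • (⊤ : Submodule R M)).mkQ := by
    rw [← LinearMap.comp_assoc, hg, LinearMap.comp_assoc, hf, ← LinearMap.comp_assoc,
      LinearEquiv.symm_comp, LinearMap.id_comp]
  have hf_bij : Function.Bijective f :=
    ⟨.of_comp (f := g) (LinearMap.bijective_of_mkQ_comp_eq_mkQ hI hgf).injective,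
      f.surjective_of_mkQ_comp_eq hI φ.surjective hf⟩
  exact ⟨.ofBijective f hf_bij, LinearMap.congr_fun hf⟩
end

section
/- Let R be a commutative ring and I an ideal contained in the Jacobson radical of R. If P is a finitely generated projective R-module such that P/IP is a free R/I-module, then P is a free R-module. -/
/-!
Since `R^m` is projective, the isomorphism `R^m/IR^m ≅ (R/I)^m ≅ P/IP` lifts to a map
`f : R^m → P`. It is surjective by Nakayama's lemma, hence split because `P` is projective.
Its kernel `K` is then a finitely generated direct summand of `R^m` lying in `IR^m`, so
`K = K ∩ IR^m = IK`, and Nakayama's lemma again gives `K = 0`.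
-/

open Submodule LinearMap

section

variable {R M N : Type*} [CommRing R] [AddCommGroup M] [Module R M] [AddCommGroup N] [Module R N]
  {I : Ideal R}

theorem LinearMap.surjective_of_surjective_mkQ_comp [Module.Finite R M]
    (hI : I ≤ Ideal.jacobson ⊥) {f : N →ₗ[R] M}
    (hf : Function.Surjective ((I • ⊤ : Submodule R M).mkQ ∘ₗ f)) :
    Function.Surjective f := by
  rw [← range_eq_top, eq_top_iff]
  refine le_of_le_smul_of_le_jacobson_bot Module.Finite.fg_top hI fun x _ => ?_
  obtain ⟨y, hy⟩ := hf (mkQ _ x)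
  have hxy : x - f y ∈ I • ⊤ := (Submodule.Quotient.eq _).mp hy.symm
  exact mem_sup.mpr ⟨f y, mem_range_self f y, x - f y, hxy, add_sub_cancel _ _⟩

theorem LinearMap.range_id_sub_comp_eq_ker {f : N →ₗ[R] M} {s : M →ₗ[R] N}
    (hs : f ∘ₗ s = id) : range (id - s ∘ₗ f) = ker f := by
  apply le_antisymm
  · rintro _ ⟨x, rfl⟩
    simp [mem_ker, ← comp_apply f s, hs]
  · intro x hx
    exact ⟨x, by simp [mem_ker.mp hx]⟩

theorem LinearMap.ker_inf_smul_top_le_smul_ker {f : N →ₗ[R] M} {s : M →ₗ[R] N}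
    (hs : f ∘ₗ s = id) : ker f ⊓ I • ⊤ ≤ I • ker f := by
  rintro x ⟨hx, hxI⟩
  have hfix : (id - s ∘ₗ f : N →ₗ[R] N) x = x := by simp [mem_ker.mp hx]
  rw [← range_id_sub_comp_eq_ker hs, range_eq_map, ← map_smul'', ← hfix]
  exact mem_map_of_mem hxI

theorem LinearMap.injective_of_ker_le_smul_top_of_comp_eq_id [Module.Finite R N]
    (hI : I ≤ Ideal.jacobson ⊥) {f : N →ₗ[R] M} {s : M →ₗ[R] N} (hs : f ∘ₗ s = id)
    (hker : ker f ≤ I • ⊤) : Function.Injective f := by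
  have hfg : (ker f).FG := by
    rw [← range_id_sub_comp_eq_ker hs, range_eq_map]
    exact Module.Finite.fg_top.map _
  rw [← ker_eq_bot]
  exact eq_bot_of_le_smul_of_le_jacobson_bot I _ hfg
    ((le_inf le_rfl hker).trans (ker_inf_smul_top_le_smul_ker hs)) hI

theorem Module.Projective.nonempty_linearEquiv_of_quotient_smul_top [Module.Finite R N]
    [Module.Projective R N] [Module.Finite R M] [Module.Projective R M]
    (hI : I ≤ Ideal.jacobson ⊥)
    (e : (N ⧸ (I • ⊤ : Submodule R N)) ≃ₗ[R] M ⧸ (I • ⊤ : Submodule R M)) :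
    Nonempty (N ≃ₗ[R] M) := by
  obtain ⟨f, hf⟩ := projective_lifting_property (I • ⊤ : Submodule R M).mkQ
    (e.toLinearMap ∘ₗ mkQ _) (mkQ_surjective _)
  have hsurj : Function.Surjective f := surjective_of_surjective_mkQ_comp hI <| by
    rw [hf]; exact e.surjective.comp (mkQ_surjective _)
  obtain ⟨s, hs⟩ := projective_lifting_property f id hsurj
  have hker : ker f ≤ I • ⊤ := fun x hx => by
    have : e (mkQ _ x) = 0 := by
      rw [← LinearEquiv.coe_coe, ← comp_apply, ← hf, comp_apply, mem_ker.mp hx, map_zero]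
    simpa using this
  exact ⟨.ofBijective f ⟨injective_of_ker_le_smul_top_of_comp_eq_id hI hs hker, hsurj⟩⟩

end

noncomputable def Ideal.quotientSMulTopPiEquiv {R : Type*} [CommRing R] (I : Ideal R)
    (ι : Type*) [Fintype ι] [DecidableEq ι] :
    ((ι → R) ⧸ (I • ⊤ : Submodule R (ι → R))) ≃ₗ[R] (ι → R ⧸ I) :=
  (TensorProduct.quotTensorEquivQuotSMul (ι → R) I).symm ≪≫ₗ
    TensorProduct.piScalarRight R R (R ⧸ I) ι

/-- If `I` is an ideal contained in the Jacobson radical of a commutative ring `R` and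
`P` is a finitely generated projective `R`-module such that `P/IP` is a free `R/I`-module
(equivalently, `P/IP ≅ (R/I)^m` for some `m`), then `P` is a free `R`-module. -/
theorem free_of_quotient_free_of_le_jacobson
    {R : Type*} [CommRing R] (I : Ideal R)
    (hI : I ≤ Ideal.jacobson (⊥ : Ideal R))
    (P : Type*) [AddCommGroup P] [Module R P]
    [Module.Finite R P] [Module.Projective R P]
    (hfree : ∃ m : ℕ,
      Nonempty ((P ⧸ (I • (⊤ : Submodule R P))) ≃ₗ[R] (Fin m → R ⧸ I))) :
    Module.Free R P := by
  obtain ⟨m, ⟨e⟩⟩ := hfree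
  obtain ⟨φ⟩ := Module.Projective.nonempty_linearEquiv_of_quotient_smul_top hI
    (e ≪≫ₗ (I.quotientSMulTopPiEquiv (Fin m)).symm)
  exact Module.Free.of_equiv φ.symm
end

section
/- Let (R_i, φ_i) be a directed system of rings each of which is ϖ-adically complete for a fixed nonzerodivisor ϖ mapped compatibly through the system, such that each pair (R_i, (ϖ)) is Henselian, and let R = ⋃_i R_i with ϖ lying in the Jacobson radical of R. Then the pair (R, (ϖ)) is Henselian. -/
/-!
A Henselian lifting problem over `R` (a monic `f`, an approximate root `a₀` and an inverse
of `f'(a₀)` modulo the ideal) involves only finitely many elements of `R`, so it is already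
posed over some `R_i`, where it is solved by the Henselian property of `R_i`.
-/

open Polynomial Filter

theorem Ideal.Quotient.isUnit_mk_iff_exists_mul_sub_one_mem {A : Type*} [CommRing A]
    {I : Ideal A} {x : A} : IsUnit (Ideal.Quotient.mk I x) ↔ ∃ b, x * b - 1 ∈ I := by
  simp only [isUnit_iff_exists_inv, ← Ideal.Quotient.eq, map_mul, map_one]
  constructor
  · rintro ⟨b, hb⟩
    obtain ⟨b, rfl⟩ := Ideal.Quotient.mk_surjective b
    exact ⟨b, hb⟩
  · rintro ⟨b, hb⟩
    exact ⟨_, hb⟩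

theorem Polynomial.coe_eval_toSubring {R : Type*} [CommRing R] (f : R[X]) (A : Subring R)
    (hf : ↑f.coeffs ⊆ (A : Set R)) (a : A) :
    (((f.toSubring A hf).eval a : A) : R) = f.eval ↑a := by
  conv_rhs => rw [← map_toSubring f A hf]
  exact (eval_map_apply (f := A.subtype) a).symm

theorem Polynomial.coe_eval_derivative_toSubring {R : Type*} [CommRing R] (f : R[X])
    (A : Subring R) (hf : ↑f.coeffs ⊆ (A : Set R)) (a : A) :
    (((f.toSubring A hf).derivative.eval a : A) : R) = f.derivative.eval ↑a := by
  conv_rhs => rw [← map_toSubring f A hf, derivative_map]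
  exact (eval_map_apply (f := A.subtype) a).symm

theorem Monotone.eventually_mem_of_forall_exists_mem {R ι T : Type*} [Preorder ι]
    [SetLike T R] [PartialOrder T] [IsConcreteLE T R] {S : ι → T} (hmono : Monotone S)
    (hunion : ∀ r, ∃ i, r ∈ S i) (r : R) :
    ∀ᶠ i in atTop, r ∈ S i :=
  let ⟨i, hi⟩ := hunion r
  (eventually_ge_atTop i).mono fun _ hj ↦ SetLike.le_def.mp (hmono hj) hi

theorem HenselianRing.of_directed_union {R ι : Type*} [CommRing R] [Preorder ι]
    [IsDirected ι (· ≤ ·)] [Nonempty ι] (S : ι → Subring R) (hmono : Monotone S)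
    (hunion : ∀ r, ∃ i, r ∈ S i) (I : Ideal R) (hI : I ≤ Ideal.jacobson ⊥)
    (J : ∀ i, Ideal (S i)) [∀ i, HenselianRing (S i) (J i)]
    (hJI : ∀ i, J i ≤ I.comap (S i).subtype)
    (hIJ : ∀ x ∈ I, ∀ᶠ i in atTop, ∃ y ∈ J i, (y : R) = x) :
    HenselianRing R I := by
  refine ⟨hI, fun f hf a₀ hfa₀ hunit ↦ ?_⟩
  obtain ⟨b, hb⟩ := Ideal.Quotient.isUnit_mk_iff_exists_mul_sub_one_mem.mp hunit
  have hmem := hmono.eventually_mem_of_forall_exists_mem hunion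
  have hcoeffs_eventually : ∀ᶠ i in atTop, ↑f.coeffs ⊆ (S i : Set R) :=
    (eventually_all_finset f.coeffs).mpr fun r _ ↦ hmem r
  obtain ⟨i, ⟨hcoeffs, ha₀, hbi⟩, ⟨y, hy, hfy⟩, ⟨z, hz, hdz⟩⟩ :=
    (hcoeffs_eventually.and ((hmem a₀).and (hmem b)) |>.and ((hIJ _ hfa₀).and (hIJ _ hb))).exists
  have heval : (f.toSubring (S i) hcoeffs).eval ⟨a₀, ha₀⟩ ∈ J i := by
    convert hy
    exact Subtype.ext ((coe_eval_toSubring ..).trans hfy.symm)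
  have hderiv : IsUnit (Ideal.Quotient.mk (J i)
      ((f.toSubring (S i) hcoeffs).derivative.eval ⟨a₀, ha₀⟩)) := by
    refine Ideal.Quotient.isUnit_mk_iff_exists_mul_sub_one_mem.mpr ⟨⟨b, hbi⟩, ?_⟩
    convert hz
    ext
    rw [hdz, AddSubgroupClass.coe_sub, MulMemClass.coe_mul, coe_eval_derivative_toSubring,
      OneMemClass.coe_one]
  obtain ⟨a, ha, haa₀⟩ :=
    HenselianRing.is_henselian _ ((monic_toSubring ..).mpr hf) _ heval hderiv
  refine ⟨a, ?_, hJI i haa₀⟩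
  rw [IsRoot, ← coe_eval_toSubring f (S i) hcoeffs, ha, ZeroMemClass.coe_zero]

theorem Ideal.span_singleton_le_comap_span_singleton {A B : Type*} [CommRing A] [CommRing B]
    (φ : A →+* B) (a : A) : Ideal.span {a} ≤ (Ideal.span {φ a}).comap φ :=
  (Ideal.span_singleton_le_iff_mem _).mpr (Ideal.mem_span_singleton_self (φ a))

theorem eventually_exists_mem_span_singleton_coe_eq {R ι : Type*} [CommRing R] {l : Filter ι}
    {S : ι → Subring R} (hmem : ∀ r, ∀ᶠ i in l, r ∈ S i) {ϖ : R} (hϖ : ∀ i, ϖ ∈ S i) {x : R}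
    (hx : x ∈ Ideal.span {ϖ}) :
    ∀ᶠ i in l, ∃ y ∈ Ideal.span {(⟨ϖ, hϖ i⟩ : S i)}, (y : R) = x := by
  obtain ⟨c, rfl⟩ := Ideal.mem_span_singleton'.mp hx
  exact (hmem c).mono fun i hc ↦
    ⟨⟨c, hc⟩ * ⟨ϖ, hϖ i⟩, Ideal.mul_mem_left _ _ (Ideal.mem_span_singleton_self _), rfl⟩

theorem henselian_of_directed_union_general
    {R : Type*} [CommRing R]
    {ι : Type*} [Preorder ι] [IsDirected ι (· ≤ ·)] [Nonempty ι]
    (S : ι → Subring R) (hmono : Monotone S)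
    (hunion : ∀ r : R, ∃ i, r ∈ S i)
    (ϖ : R)
    (hϖ : ∀ i, ϖ ∈ S i)
    (hhens : ∀ i, HenselianRing (S i) (Ideal.span {(⟨ϖ, hϖ i⟩ : S i)}))
    (hjac : ϖ ∈ Ideal.jacobson (⊥ : Ideal R)) :
    HenselianRing R (Ideal.span {ϖ}) :=
  HenselianRing.of_directed_union S hmono hunion _ ((Ideal.span_singleton_le_iff_mem _).mpr hjac)
    (fun i ↦ Ideal.span {(⟨ϖ, hϖ i⟩ : S i)})
    (fun i ↦ Ideal.span_singleton_le_comap_span_singleton (S i).subtype _)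
    fun _ ↦ eventually_exists_mem_span_singleton_coe_eq
      (hmono.eventually_mem_of_forall_exists_mem hunion) hϖ

/-- Let `R = ⋃_i R_i` be a directed union of subrings, with a fixed nonzerodivisor `ϖ`
contained in every `R_i`, such that each `R_i` is `ϖ`-adically complete and each pair
`(R_i, (ϖ))` is Henselian, and such that `ϖ` lies in the Jacobson radical of `R`.
Then the pair `(R, (ϖ))` is Henselian. -/
theorem henselian_of_directed_union
    {R : Type*} [CommRing R]
    {ι : Type*} [Preorder ι] [IsDirected ι (· ≤ ·)] [Nonempty ι]
    (S : ι → Subring R) (hmono : Monotone S)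
    (hunion : ∀ r : R, ∃ i, r ∈ S i)
    (ϖ : R) (hnzd : ∀ x : R, ϖ * x = 0 → x = 0)
    (hϖ : ∀ i, ϖ ∈ S i)
    (hcomplete : ∀ i, IsAdicComplete (Ideal.span {(⟨ϖ, hϖ i⟩ : S i)}) (S i))
    (hhens : ∀ i, HenselianRing (S i) (Ideal.span {(⟨ϖ, hϖ i⟩ : S i)}))
    (hjac : ϖ ∈ Ideal.jacobson (⊥ : Ideal R)) :
    HenselianRing R (Ideal.span {ϖ}) :=
  henselian_of_directed_union_general S hmono hunion ϖ hϖ hhens hjac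
end
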